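/- arXiv:1911.02668 — 8 statements merged into one kernel-verified Lean document; each statement's English description precedes it below -/
import Mathlib

section
/- For every UCQ q in SPARQL syntax, every graph G and every set B ⊆ U: mCanAns(q,G,B) = sparqlAns(q,G) ▷ B. (Instantiated with G the canonical model of a KB K and B = aDom(K), this says that the maximal admissible canonical answers to a UCQ coincide with the canonical answers, and hence with the certain answers.) -/
open Classical

noncomputable section

namespace SPARQL

/-- A solution mapping: a partial function from variables `V` to the universe `U`. -/
abbrev SolMap (V U : Type*) := V → Option U

namespace SolMap

variable {V U : Type*}

/-- dom(ω) -/
def dom (ω : SolMap V U) : Set V := {x | ω x ≠ none}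

/-- range(ω) -/
def ran (ω : SolMap V U) : Set U := {u | ∃ x, ω x = some u}

/-- ω1 ∼ ω2 (compatibility) -/
def Compatible (ω1 ω2 : SolMap V U) : Prop :=
  ∀ x a b, ω1 x = some a → ω2 x = some b → a = b

/-- ω1 ∪ ω2 (for compatible mappings, their common extension) -/
def union (ω1 ω2 : SolMap V U) : SolMap V U :=
  fun x => (ω1 x).orElse (fun _ => ω2 x)

/-- ω|_X : restriction of ω to the variable set X -/
def restrict (ω : SolMap V U) (X : Set V) : SolMap V U :=
  fun x => if x ∈ X then ω x else none

/-- ω‖_B : restriction of ω to the variables mapped into B -/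
def restrictRan (ω : SolMap V U) (B : Set U) : SolMap V U :=
  fun x => (ω x).bind (fun u => if u ∈ B then some u else none)

/-- ω1 ≼ ω2 (ω2 extends ω1) -/
def prec (ω1 ω2 : SolMap V U) : Prop :=
  dom ω1 ⊆ dom ω2 ∧ Compatible ω1 ω2

end SolMap

variable {V U C R : Type*}

/-- Ω1 ⋈ Ω2 -/
def Join (Ω1 Ω2 : Set (SolMap V U)) : Set (SolMap V U) :=
  {ω | ∃ ω1 ∈ Ω1, ∃ ω2 ∈ Ω2, SolMap.Compatible ω1 ω2 ∧ ω = SolMap.union ω1 ω2}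

/-- Ω1 ∖ Ω2 -/
def Diff (Ω1 Ω2 : Set (SolMap V U)) : Set (SolMap V U) :=
  {ω | ω ∈ Ω1 ∧ ∀ ω2 ∈ Ω2, ¬ SolMap.Compatible ω ω2}

/-- π_X Ω -/
def Proj (X : Set V) (Ω : Set (SolMap V U)) : Set (SolMap V U) :=
  {ω | ∃ ω' ∈ Ω, ω = SolMap.restrict ω' X}

/-- Ω ▷ B -/
def RangeIn (Ω : Set (SolMap V U)) (B : Set U) : Set (SolMap V U) :=
  {ω | ω ∈ Ω ∧ SolMap.ran ω ⊆ B}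

/-- Ω ▶ B -/
def RangeRestrict (Ω : Set (SolMap V U)) (B : Set U) : Set (SolMap V U) :=
  {ω | ∃ ω' ∈ Ω, ω = SolMap.restrictRan ω' B}

/-- Ω ⊗ 𝒳 : restrictions of members of Ω to ⊆-maximal admissible subsets of their domains -/
def MaxAdm (Ω : Set (SolMap V U)) (𝒳 : Set (Set V)) : Set (SolMap V U) :=
  {ω | ∃ ω' ∈ Ω, ∃ X ∈ 𝒳, X ⊆ SolMap.dom ω' ∧
    (∀ Y ∈ 𝒳, Y ⊆ SolMap.dom ω' → X ⊆ Y → Y = X) ∧ ω = SolMap.restrict ω' X}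

/-- Ω1 ≼_g Ω2 -/
def PrecG (Ω1 Ω2 : Set (SolMap V U)) : Prop :=
  ∀ ω1 ∈ Ω1, ∃ ω2 ∈ Ω2, SolMap.prec ω1 ω2

/-- Atoms: A(u) for a concept name A, or r(u1,u2) for a role name r. -/
inductive Atom (U C R : Type*) where
  | concept (A : C) (u : U)
  | role (r : R) (u1 u2 : U)

/-- A graph is a set of atoms. -/
abbrev Graph (U C R : Type*) := Set (Atom U C R)

/-- aDom(G): the elements of U occurring in the atoms of G. -/
def Graph.aDom (G : Graph U C R) : Set U :=
  {u | (∃ A, Atom.concept A u ∈ G) ∨ (∃ r w, Atom.role r u w ∈ G) ∨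
       (∃ r w, Atom.role r w u ∈ G)}

/-- An ABox: a finite graph whose atoms only use individuals (elements of NI). -/
def Graph.IsABox (NI : Set U) (G : Graph U C R) : Prop :=
  G.Finite ∧ ∀ a ∈ G,
    match a with
    | Atom.concept _ u => u ∈ NI
    | Atom.role _ u1 u2 => u1 ∈ NI ∧ u2 ∈ NI

/-- Constant-preserving homomorphism from G to I. -/
def IsHom (NI : Set U) (h : U → U) (G I : Graph U C R) : Prop :=
  (∀ c ∈ NI, h c = c) ∧
  (∀ (A : C) (u : U), Atom.concept A u ∈ G → Atom.concept A (h u) ∈ I) ∧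
  (∀ (r : R) (u1 u2 : U), Atom.role r u1 u2 ∈ G → Atom.role r (h u1) (h u2) ∈ I)

/-- Terms of triple patterns: variables or individuals (elements of NI ⊆ U). -/
inductive Term (V U : Type*) (NI : Set U) where
  | var (v : V)
  | cst (c : NI)

def Term.vars {NI : Set U} : Term V U NI → Set V
  | .var v => {v}
  | .cst _ => ∅

def Term.app {NI : Set U} : Term V U NI → SolMap V U → Option U
  | .var v, ω => ω v
  | .cst c, _ => some c.1

/-- Triple patterns. -/
inductive Pattern (V U C R : Type*) (NI : Set U) where
  | concept (A : C) (t : Term V U NI)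
  | role (r : R) (t1 t2 : Term V U NI)

def Pattern.vars {NI : Set U} : Pattern V U C R NI → Set V
  | .concept _ t => t.vars
  | .role _ t1 t2 => t1.vars ∪ t2.vars

/-- ω(t): the atom obtained by applying ω to the triple pattern t (if defined). -/
def Pattern.app {NI : Set U} : Pattern V U C R NI → SolMap V U → Option (Atom U C R)
  | .concept A t, ω => (t.app ω).map (Atom.concept A)
  | .role r t1 t2, ω => (t1.app ω).bind fun u1 => (t2.app ω).map fun u2 => Atom.role r u1 u2

/-- SUJO queries. -/
inductive Query (V U C R : Type*) (NI : Set U) where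
  | pat (t : Pattern V U C R NI)
  | select (X : Set V) (q : Query V U C R NI)
  | qunion (q1 q2 : Query V U C R NI)
  | qjoin (q1 q2 : Query V U C R NI)
  | qopt (q1 q2 : Query V U C R NI)

variable {NI : Set U}

def Query.vars : Query V U C R NI → Set V
  | .pat t => t.vars
  | .select X _ => X
  | .qunion q1 q2 => q1.vars ∪ q2.vars
  | .qjoin q1 q2 => q1.vars ∪ q2.vars
  | .qopt q1 q2 => q1.vars ∪ q2.vars

/-- Well-formedness: SELECT_X q requires X ⊆ vars(q) (part of the grammar). -/
def Query.WF : Query V U C R NI → Prop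
  | .pat _ => True
  | .select X q => X ⊆ q.vars ∧ q.WF
  | .qunion q1 q2 => q1.WF ∧ q2.WF
  | .qjoin q1 q2 => q1.WF ∧ q2.WF
  | .qopt q1 q2 => q1.WF ∧ q2.WF

/-- sparqlAns(q,G) -/
def ans : Query V U C R NI → Graph U C R → Set (SolMap V U)
  | .pat t, G => {ω | SolMap.dom ω = t.vars ∧ ∃ a ∈ G, t.app ω = some a}
  | .select X q, G => Proj X (ans q G)
  | .qunion q1 q2, G => ans q1 G ∪ ans q2 G
  | .qjoin q1 q2, G => Join (ans q1 G) (ans q2 G)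
  | .qopt q1 q2, G => Join (ans q1 G) (ans q2 G) ∪ Diff (ans q1 G) (ans q2 G)

/-- adm(q): admissible sets of variables. -/
def adm : Query V U C R NI → Set (Set V)
  | .pat t => {t.vars}
  | .select X q => {Y | ∃ X' ∈ adm q, Y = X' ∩ X}
  | .qunion q1 q2 => adm q1 ∪ adm q2
  | .qjoin q1 q2 => {Y | ∃ X1 ∈ adm q1, ∃ X2 ∈ adm q2, Y = X1 ∪ X2}
  | .qopt q1 q2 => adm q1 ∪ {Y | ∃ X1 ∈ adm q1, ∃ X2 ∈ adm q2, Y = X1 ∪ X2}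

/-- branch(q) -/
def branch : Query V U C R NI → Set (Query V U C R NI)
  | .pat t => {Query.pat t}
  | .select X q => {q' | ∃ b ∈ branch q, q' = Query.select X b}
  | .qunion q1 q2 => branch q1 ∪ branch q2
  | .qjoin q1 q2 => {q' | ∃ b1 ∈ branch q1, ∃ b2 ∈ branch q2, q' = Query.qjoin b1 b2}
  | .qopt q1 q2 => {q' | ∃ b1 ∈ branch q1, ∃ b2 ∈ branch q2, q' = Query.qopt b1 b2}

/-- Maximal admissible canonical answers mCanAns(q,G,B). -/
def mCanAns (q : Query V U C R NI) (G : Graph U C R) (B : Set U) : Set (SolMap V U) :=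
  {ω | ∃ q' ∈ branch q, ω ∈ MaxAdm (RangeRestrict (ans q G ∩ ans q' G) B) (adm q')}

/-- certAns(q,⟨∅,A⟩): certain answers over the KB with empty TBox and ABox A. -/
def certAns (q : Query V U C R NI) (A : Graph U C R) : Set (SolMap V U) :=
  {ω | SolMap.ran ω ⊆ Graph.aDom A ∧ ∀ I : Graph U C R, A ⊆ I → ω ∈ ans q I}

/-- Entailment regime answers eRAns(q,A) (for the KB with empty TBox). -/
def eRAns : Query V U C R NI → Graph U C R → Set (SolMap V U)
  | .pat t, A => certAns (Query.pat t) A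
  | .select X q, A => Proj X (eRAns q A)
  | .qunion q1 q2, A => eRAns q1 A ∪ eRAns q2 A
  | .qjoin q1 q2, A => Join (eRAns q1 A) (eRAns q2 A)
  | .qopt q1 q2, A => Join (eRAns q1 A) (eRAns q2 A) ∪ Diff (eRAns q1 A) (eRAns q2 A)

/-- UNION-free queries. -/
def UnionFree : Query V U C R NI → Prop
  | .pat _ => True
  | .select _ q => UnionFree q
  | .qunion _ _ => False
  | .qjoin q1 q2 => UnionFree q1 ∧ UnionFree q2
  | .qopt q1 q2 => UnionFree q1 ∧ UnionFree q2

/-- OPT-free queries. -/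
def OptFree : Query V U C R NI → Prop
  | .pat _ => True
  | .select _ q => OptFree q
  | .qunion q1 q2 => OptFree q1 ∧ OptFree q2
  | .qjoin q1 q2 => OptFree q1 ∧ OptFree q2
  | .qopt _ _ => False

/-- A conjunction of triple patterns (JOINs of triple patterns). -/
def IsConj : Query V U C R NI → Prop
  | .pat _ => True
  | .qjoin q1 q2 => IsConj q1 ∧ IsConj q2
  | _ => False

/-- A UCQ in SPARQL syntax with distinguished variables X. -/
def IsUCQ (X : Set V) : Query V U C R NI → Prop
  | .qunion q1 q2 => IsUCQ X q1 ∧ IsUCQ X q2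
  | .select Y q => Y = X ∧ X ⊆ Query.vars q ∧ IsConj q
  | _ => False

/-- JO queries: built from triple patterns using only JOIN and OPT. -/
def IsJO : Query V U C R NI → Prop
  | .pat _ => True
  | .qjoin q1 q2 => IsJO q1 ∧ IsJO q2
  | .qopt q1 q2 => IsJO q1 ∧ IsJO q2
  | _ => False

/-- min_⊆(F): the ⊆-minimal elements of F. -/
def minEls (F : Set (Set V)) : Set (Set V) :=
  {B | B ∈ F ∧ ∀ B' ∈ F, B' ⊆ B → B' = B}

/-- base(q) for JO queries (junk values on SELECT/UNION). -/
def base : Query V U C R NI → Set (Set V)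
  | .pat t => {t.vars}
  | .qjoin q1 q2 =>
      {Y | ∃ B1 ∈ minEls (base q1), ∃ B2 ∈ base q2, Y = B1 ∪ B2} ∪
      {Y | ∃ B1 ∈ base q1, ∃ B2 ∈ minEls (base q2), Y = B1 ∪ B2}
  | .qopt q1 q2 => base q1 ∪
      ({Y | ∃ B1 ∈ minEls (base q1), ∃ B2 ∈ base q2, Y = B1 ∪ B2} ∪
       {Y | ∃ B1 ∈ base q1, ∃ B2 ∈ minEls (base q2), Y = B1 ∪ B2})
  | .select _ _ => ∅
  | .qunion _ _ => ∅

/-!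
Every branch of a UCQ is `SELECT_X c` for a conjunction `c` of triple patterns, so all its
answers have domain exactly `X` and its only admissible set is `X`. Hence `▶ B` followed by
`⊗ {X}` keeps an answer unchanged when its range lies in `B` and discards it otherwise, and the
answers to `q` are the union of the answers to its branches.
-/

namespace SolMap

theorem dom_union (ω1 ω2 : SolMap V U) : dom (union ω1 ω2) = dom ω1 ∪ dom ω2 := by
  ext x
  cases h : ω1 x <;> simp [dom, union, Option.orElse, h]

theorem dom_restrict (ω : SolMap V U) (X : Set V) : dom (restrict ω X) = dom ω ∩ X := by
  ext x
  by_cases hx : x ∈ X <;> simp [dom, restrict, hx]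

theorem restrict_eq_self {ω : SolMap V U} {X : Set V} (h : dom ω ⊆ X) : restrict ω X = ω := by
  funext x
  by_cases hx : x ∈ X
  · simp [restrict, hx]
  · have hωx : ω x = none := by simpa [dom] using mt (@h x) hx
    simp [restrict, hx, hωx]

theorem restrictRan_eq_self {ω : SolMap V U} {B : Set U} (h : ran ω ⊆ B) :
    restrictRan ω B = ω := by
  funext x
  cases hx : ω x with
  | none => simp [restrictRan, hx]
  | some u => simp [restrictRan, hx, h ⟨x, hx⟩]

theorem ran_subset_of_dom_subset_dom_restrictRan {ω : SolMap V U} {B : Set U}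
    (h : dom ω ⊆ dom (restrictRan ω B)) : ran ω ⊆ B := by
  rintro u ⟨x, hx⟩
  have hx' := h (show x ∈ dom ω by simp [dom, hx])
  by_contra hu
  simp [dom, restrictRan, hx, hu] at hx'

end SolMap

theorem maxAdm_rangeRestrict_singleton {Ω : Set (SolMap V U)} {X : Set V} (B : Set U)
    (hdom : ∀ ω ∈ Ω, SolMap.dom ω = X) :
    MaxAdm (RangeRestrict Ω B) {X} = RangeIn Ω B := by
  ext ω
  constructor
  · rintro ⟨_, ⟨ω', hω', rfl⟩, _, rfl, hsub, -, rfl⟩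
    rw [← hdom ω' hω'] at hsub ⊢
    have hran := SolMap.ran_subset_of_dom_subset_dom_restrictRan hsub
    rw [SolMap.restrictRan_eq_self hran, SolMap.restrict_eq_self le_rfl]
    exact ⟨hω', hran⟩
  · rintro ⟨hω, hran⟩
    have hdomω := hdom ω hω
    exact ⟨ω, ⟨ω, hω, (SolMap.restrictRan_eq_self hran).symm⟩, X, rfl, hdomω.ge,
      fun Y hY _ _ => hY, (SolMap.restrict_eq_self hdomω.le).symm⟩

namespace IsConj

variable {c : Query V U C R NI}

theorem adm_eq (hc : IsConj c) : adm c = {c.vars} := by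
  induction c with
  | pat t => rfl
  | qjoin q1 q2 ih1 ih2 =>
    ext Y
    simp [adm, ih1 hc.1, ih2 hc.2, Query.vars]
  | _ => exact hc.elim

theorem branch_eq (hc : IsConj c) : branch c = {c} := by
  induction c with
  | pat t => rfl
  | qjoin q1 q2 ih1 ih2 =>
    ext q'
    simp [branch, ih1 hc.1, ih2 hc.2]
  | _ => exact hc.elim

theorem dom_of_mem_ans (hc : IsConj c) {G : Graph U C R} {ω : SolMap V U} (hω : ω ∈ ans c G) :
    SolMap.dom ω = c.vars := by
  induction c generalizing ω with
  | pat t => exact hω.1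
  | qjoin q1 q2 ih1 ih2 =>
    obtain ⟨ω1, hω1, ω2, hω2, -, rfl⟩ := hω
    rw [SolMap.dom_union, ih1 hc.1 hω1, ih2 hc.2 hω2]
    rfl
  | _ => exact hc.elim

theorem adm_select (hc : IsConj c) {X : Set V} (hX : X ⊆ c.vars) :
    adm (Query.select X c) = {X} := by
  simp [adm, hc.adm_eq, Set.inter_eq_right.mpr hX]

theorem dom_of_mem_ans_select (hc : IsConj c) {X : Set V} (hX : X ⊆ c.vars) {G : Graph U C R}
    {ω : SolMap V U} (hω : ω ∈ ans (Query.select X c) G) : SolMap.dom ω = X := by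
  obtain ⟨ω', hω', rfl⟩ := hω
  rw [SolMap.dom_restrict, hc.dom_of_mem_ans hω', Set.inter_eq_right.mpr hX]

end IsConj

namespace IsUCQ

variable {q : Query V U C R NI} {X : Set V}

theorem exists_of_mem_branch (hq : IsUCQ X q) {q' : Query V U C R NI} (hq' : q' ∈ branch q) :
    ∃ c, IsConj c ∧ X ⊆ c.vars ∧ q' = Query.select X c := by
  induction q with
  | select Y c =>
    obtain ⟨rfl, hXc, hc⟩ := hq
    obtain ⟨b, hb, rfl⟩ := hq'
    rw [hc.branch_eq, Set.mem_singleton_iff] at hb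
    exact ⟨c, hc, hXc, hb ▸ rfl⟩
  | qunion q1 q2 ih1 ih2 => exact hq'.elim (ih1 hq.1) (ih2 hq.2)
  | _ => exact hq.elim

theorem ans_eq_biUnion_branch (hq : IsUCQ X q) (G : Graph U C R) :
    ans q G = ⋃ q' ∈ branch q, ans q' G := by
  induction q with
  | select Y c =>
    simp [branch, hq.2.2.branch_eq]
  | qunion q1 q2 ih1 ih2 =>
    rw [ans, branch, Set.biUnion_union, ih1 hq.1, ih2 hq.2]
  | _ => exact hq.elim

theorem maxAdm_branch (hq : IsUCQ X q) {q' : Query V U C R NI} (hq' : q' ∈ branch q)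
    (G : Graph U C R) (B : Set U) :
    MaxAdm (RangeRestrict (ans q G ∩ ans q' G) B) (adm q') = RangeIn (ans q' G) B := by
  have hsub : ans q' G ⊆ ans q G :=
    hq.ans_eq_biUnion_branch G ▸ Set.subset_biUnion_of_mem (u := fun q' => ans q' G) hq'
  obtain ⟨c, hc, hXc, rfl⟩ := hq.exists_of_mem_branch hq'
  rw [Set.inter_eq_right.mpr hsub, hc.adm_select hXc]
  exact maxAdm_rangeRestrict_singleton B fun _ => hc.dom_of_mem_ans_select hXc

end IsUCQ

/-- for a UCQ q, maximal admissible canonical answers coincide with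
`sparqlAns(q,G) ▷ B`. -/
theorem stmt_2 {V U C R : Type*} {NI : Set U} (q : Query V U C R NI) (X : Set V)
    (hq : IsUCQ X q) (G : Graph U C R) (B : Set U) :
    mCanAns q G B = RangeIn (ans q G) B := by
  ext ω
  have hbranch : ω ∈ mCanAns q G B ↔ ∃ q' ∈ branch q, ω ∈ RangeIn (ans q' G) B :=
    exists_congr fun q' => and_congr_right fun hq' => by rw [hq.maxAdm_branch hq' G B]
  rw [hbranch, hq.ans_eq_biUnion_branch G]
  simp [RangeIn, ← and_assoc, exists_and_right]

end SPARQL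
end
end

section
/- OPT extension for maximal admissible canonical answers of UNION-free queries: for all UNION-free SUJO queries q1 and q2, every graph G and every set B ⊆ U, ((sparqlAns(q1,G) ▶ B) ⊗ adm(q1)) ≼_g ((sparqlAns(q1 OPT q2, G) ▶ B) ⊗ adm(q1 OPT q2)); that is, every mapping in the left-hand set is extended by some mapping in the right-hand set. -/
open Classical

noncomputable section

namespace SPARQL

variable {V U C R : Type*}

variable {NI : Set U}

/-! An answer of `q1` is either extended by a compatible answer of `q2` or survives unchanged
in the OPT difference, so `sparqlAns(q1,G) ≼_g sparqlAns(q1 OPT q2, G)`, and `▶ B` preserves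
`≼_g`. For `⊗`, a set `X ∈ adm(q1)` inside the domain of an answer of `q1` is admissible for
`q1 OPT q2` and lies inside the domain of the extending answer; since `adm` is finite, it can be
enlarged to a maximal such set there, and restricting to the larger set still extends. -/

namespace SolMap

variable {V U : Type*} {ω1 ω2 : SolMap V U}

theorem prec_iff : prec ω1 ω2 ↔ ∀ x u, ω1 x = some u → ω2 x = some u := by
  refine ⟨fun ⟨hdom, hcomp⟩ x u hx => ?_, fun h => ⟨fun x hx => ?_, fun x a b ha hb => ?_⟩⟩
  · obtain ⟨v, hv⟩ := Option.ne_none_iff_exists'.mp (hdom (show x ∈ dom ω1 by simp [dom, hx]))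
    rw [hv, hcomp x u v hx hv]
  · obtain ⟨u, hu⟩ := Option.ne_none_iff_exists'.mp hx
    simp [dom, h x u hu]
  · simpa [h x a ha] using hb

theorem prec_union_left (ω1 ω2 : SolMap V U) : prec ω1 (union ω1 ω2) :=
  prec_iff.mpr fun x u hx => by simp [union, hx]

theorem prec_refl (ω : SolMap V U) : prec ω ω :=
  prec_iff.mpr fun _ _ => id

theorem restrictRan_eq_some (ω : SolMap V U) (B : Set U) (x : V) (u : U) :
    restrictRan ω B x = some u ↔ ω x = some u ∧ u ∈ B := by
  simp only [restrictRan, Option.bind_eq_some_iff, Option.ite_none_right_eq_some]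
  grind

theorem prec.restrictRan (h : prec ω1 ω2) (B : Set U) :
    prec (restrictRan ω1 B) (restrictRan ω2 B) :=
  prec_iff.mpr fun x u hx => by
    rw [restrictRan_eq_some] at hx ⊢
    exact ⟨prec_iff.mp h x u hx.1, hx.2⟩

theorem prec.restrict (h : prec ω1 ω2) {X Y : Set V} (hXY : X ⊆ Y) :
    prec (restrict ω1 X) (restrict ω2 Y) :=
  prec_iff.mpr fun x u hx => by
    by_cases hxX : x ∈ X
    · simp only [SolMap.restrict, hxX, hXY hxX, if_true] at hx ⊢
      exact prec_iff.mp h x u hx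
    · simp [SolMap.restrict, hxX] at hx

end SolMap

section PrecG

variable {Ω1 Ω2 : Set (SolMap V U)}

theorem PrecG.rangeRestrict (h : PrecG Ω1 Ω2) (B : Set U) :
    PrecG (RangeRestrict Ω1 B) (RangeRestrict Ω2 B) := by
  rintro _ ⟨ω1, hω1, rfl⟩
  obtain ⟨ω2, hω2, hprec⟩ := h ω1 hω1
  exact ⟨_, ⟨ω2, hω2, rfl⟩, hprec.restrictRan B⟩

theorem PrecG.maxAdm (h : PrecG Ω1 Ω2) {𝒳 𝒴 : Set (Set V)} (h𝒳𝒴 : 𝒳 ⊆ 𝒴)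
    (h𝒴 : 𝒴.Finite) : PrecG (MaxAdm Ω1 𝒳) (MaxAdm Ω2 𝒴) := by
  rintro _ ⟨ω1, hω1, X, hX, hXdom, -, rfl⟩
  obtain ⟨ω2, hω2, hprec⟩ := h ω1 hω1
  have hX' : X ∈ {Y ∈ 𝒴 | Y ⊆ SolMap.dom ω2} := ⟨h𝒳𝒴 hX, hXdom.trans hprec.1⟩
  obtain ⟨Y, hXY, ⟨hY, hYdom⟩, hYmax⟩ :=
    (h𝒴.subset (Set.sep_subset _ _)).exists_le_maximal hX'
  refine ⟨_, ⟨ω2, hω2, Y, hY, hYdom, ?_, rfl⟩, hprec.restrict hXY⟩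
  exact fun Z hZ hZdom hYZ => (hYmax ⟨hZ, hZdom⟩ hYZ).antisymm hYZ

end PrecG

theorem adm_finite (q : Query V U C R NI) : (adm q).Finite := by
  induction q with
  | pat t => exact Set.finite_singleton _
  | select X q ih =>
    have : adm (.select X q) = (· ∩ X) '' adm q := by
      ext Y; simp [adm, eq_comm]
    exact this ▸ ih.image _
  | qunion q1 q2 ih1 ih2 => exact ih1.union ih2
  | qjoin q1 q2 ih1 ih2 =>
    have : adm (.qjoin q1 q2) = Set.image2 (· ∪ ·) (adm q1) (adm q2) := by
      ext Y; simp [adm, eq_comm]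
    exact this ▸ ih1.image2 _ ih2
  | qopt q1 q2 ih1 ih2 =>
    have : adm (.qopt q1 q2) = adm q1 ∪ Set.image2 (· ∪ ·) (adm q1) (adm q2) := by
      ext Y; simp [adm, eq_comm]
    exact this ▸ ih1.union (ih1.image2 _ ih2)

theorem ans_precG_ans_qopt (q1 q2 : Query V U C R NI) (G : Graph U C R) :
    PrecG (ans q1 G) (ans (.qopt q1 q2) G) := by
  intro ω1 hω1
  by_cases hc : ∃ ω2 ∈ ans q2 G, SolMap.Compatible ω1 ω2
  · obtain ⟨ω2, hω2, hcomp⟩ := hc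
    exact ⟨_, Or.inl ⟨ω1, hω1, ω2, hω2, hcomp, rfl⟩, SolMap.prec_union_left ω1 ω2⟩
  · push Not at hc
    exact ⟨ω1, Or.inr ⟨hω1, hc⟩, SolMap.prec_refl ω1⟩

theorem stmt_4_general {V U C R : Type*} {NI : Set U} (q1 q2 : Query V U C R NI)
    (G : Graph U C R) (B : Set U) :
    PrecG (MaxAdm (RangeRestrict (ans q1 G) B) (adm q1))
      (MaxAdm (RangeRestrict (ans (Query.qopt q1 q2) G) B)
        (adm (Query.qopt q1 q2))) :=
  ((ans_precG_ans_qopt q1 q2 G).rangeRestrict B).maxAdm Set.subset_union_left (adm_finite _)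

/-- OPT extension for maximal admissible canonical answers of
UNION-free queries. -/
theorem stmt_4 {V U C R : Type*} {NI : Set U} (q1 q2 : Query V U C R NI)
    (h1 : UnionFree q1) (h2 : UnionFree q2) (hw1 : q1.WF) (hw2 : q2.WF)
    (G : Graph U C R) (B : Set U) :
    PrecG (MaxAdm (RangeRestrict (ans q1 G) B) (adm q1))
      (MaxAdm (RangeRestrict (ans (Query.qopt q1 q2) G) B)
        (adm (Query.qopt q1 q2))) :=
  stmt_4_general q1 q2 G B

end SPARQL
end
end

section
/- Binding provenance for unions of UNION-free queries: for all UNION-free SUJO queries q1 and q2, every graph G, every set B ⊆ U and every solution mapping ω, if ω ∈ mCanAns(q1 UNION q2, G, B) and ω ∉ mCanAns(q2, G, B), then dom(ω) ∈ adm(q1). -/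
open Classical

noncomputable section

namespace SPARQL

variable {V U C R : Type*}

variable {NI : Set U}

theorem SolMap.dom_restrict_s7 {ω : SolMap V U} {X : Set V} (hX : X ⊆ SolMap.dom ω) :
    SolMap.dom (SolMap.restrict ω X) = X := by
  ext x
  by_cases hx : x ∈ X
  · simpa [SolMap.dom, SolMap.restrict, hx] using hX hx
  · simp [SolMap.dom, SolMap.restrict, hx]

theorem dom_mem_of_mem_maxAdm {Ω : Set (SolMap V U)} {𝒳 : Set (Set V)} {ω : SolMap V U}
    (hω : ω ∈ MaxAdm Ω 𝒳) : SolMap.dom ω ∈ 𝒳 := by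
  obtain ⟨ω', -, X, hX, hXdom, -, rfl⟩ := hω
  rwa [SolMap.dom_restrict_s7 hXdom]

theorem branch_eq_singleton_of_unionFree {q : Query V U C R NI} (hq : UnionFree q) :
    branch q = {q} := by
  induction q with
  | pat t => rfl
  | select X q ih =>
    simp [branch, ih hq]
  | qunion q1 q2 => exact hq.elim
  | qjoin q1 q2 ih1 ih2 =>
    simp [branch, ih1 hq.1, ih2 hq.2]
  | qopt q1 q2 ih1 ih2 =>
    simp [branch, ih1 hq.1, ih2 hq.2]

theorem adm_subset_of_mem_branch {q b : Query V U C R NI} (hb : b ∈ branch q) :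
    adm b ⊆ adm q := by
  induction q generalizing b with
  | pat t =>
    rw [Set.mem_singleton_iff.mp hb]
  | select X q ih =>
    obtain ⟨b', hb', rfl⟩ := hb
    rintro _ ⟨X', hX', rfl⟩
    exact ⟨X', ih hb' hX', rfl⟩
  | qunion q1 q2 ih1 ih2 =>
    rcases hb with hb | hb
    · exact (ih1 hb).trans Set.subset_union_left
    · exact (ih2 hb).trans Set.subset_union_right
  | qjoin q1 q2 ih1 ih2 =>
    obtain ⟨b1, hb1, b2, hb2, rfl⟩ := hb
    rintro _ ⟨X1, hX1, X2, hX2, rfl⟩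
    exact ⟨X1, ih1 hb1 hX1, X2, ih2 hb2 hX2, rfl⟩
  | qopt q1 q2 ih1 ih2 =>
    obtain ⟨b1, hb1, b2, hb2, rfl⟩ := hb
    rintro _ (hX | ⟨X1, hX1, X2, hX2, rfl⟩)
    · exact Or.inl (ih1 hb1 hX)
    · exact Or.inr ⟨X1, ih1 hb1 hX1, X2, ih2 hb2 hX2, rfl⟩

theorem mCanAns_of_unionFree {q : Query V U C R NI} (hq : UnionFree q) (G : Graph U C R)
    (B : Set U) : mCanAns q G B = MaxAdm (RangeRestrict (ans q G) B) (adm q) := by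
  simp [mCanAns, branch_eq_singleton_of_unionFree hq]

theorem stmt_7_general {V U C R : Type*} {NI : Set U} (q1 q2 : Query V U C R NI)
    (h2 : UnionFree q2)
    (G : Graph U C R) (B : Set U) (ω : SolMap V U)
    (hmem : ω ∈ mCanAns (Query.qunion q1 q2) G B) (hnot : ω ∉ mCanAns q2 G B) :
    SolMap.dom ω ∈ adm q1 := by
  obtain ⟨q', hq', hω⟩ := hmem
  rcases hq' with hq' | hq'
  · exact adm_subset_of_mem_branch hq' (dom_mem_of_mem_maxAdm hω)
  · rw [branch_eq_singleton_of_unionFree h2, Set.mem_singleton_iff] at hq'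
    have hans : ans (Query.qunion q1 q2) G ∩ ans q2 G = ans q2 G :=
      Set.union_inter_cancel_right
    rw [hq', hans] at hω
    refine absurd ?_ hnot
    rwa [mCanAns_of_unionFree h2]

/-- binding provenance for unions of UNION-free queries. -/
theorem stmt_7 {V U C R : Type*} {NI : Set U} (q1 q2 : Query V U C R NI)
    (h1 : UnionFree q1) (h2 : UnionFree q2) (hw1 : q1.WF) (hw2 : q2.WF)
    (G : Graph U C R) (B : Set U) (ω : SolMap V U)
    (hmem : ω ∈ mCanAns (Query.qunion q1 q2) G B) (hnot : ω ∉ mCanAns q2 G B) :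
    SolMap.dom ω ∈ adm q1 :=
  stmt_7_general q1 q2 h2 G B ω hmem hnot

end SPARQL
end
end

section
/- Binding provenance for SPARQL answers over a plain graph: for all SUJO queries q1 and q2, every graph G and every solution mapping ω, if ω ∈ sparqlAns(q1 UNION q2, G) and ω ∉ sparqlAns(q2, G), then dom(ω) ∈ adm(q1). -/
open Classical

noncomputable section

namespace SPARQL

variable {V U C R : Type*}

variable {NI : Set U}

theorem dom_mem_adm_of_mem_ans {q : Query V U C R NI} {G : Graph U C R} {ω : SolMap V U}
    (hω : ω ∈ ans q G) : SolMap.dom ω ∈ adm q := by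
  induction q generalizing ω with
  | pat t => exact hω.1
  | select X q ih =>
    obtain ⟨ω', hω', rfl⟩ := hω
    exact ⟨_, ih hω', SolMap.dom_restrict ω' X⟩
  | qunion q1 q2 ih1 ih2 => exact hω.imp ih1 ih2
  | qjoin q1 q2 ih1 ih2 =>
    obtain ⟨ω1, hω1, ω2, hω2, -, rfl⟩ := hω
    exact ⟨_, ih1 hω1, _, ih2 hω2, SolMap.dom_union ω1 ω2⟩
  | qopt q1 q2 ih1 ih2 =>
    rcases hω with ⟨ω1, hω1, ω2, hω2, -, rfl⟩ | ⟨hω1, -⟩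
    · exact Or.inr ⟨_, ih1 hω1, _, ih2 hω2, SolMap.dom_union ω1 ω2⟩
    · exact Or.inl (ih1 hω1)

theorem stmt_9_general {V U C R : Type*} {NI : Set U} (q1 q2 : Query V U C R NI)
    (G : Graph U C R) (ω : SolMap V U)
    (hmem : ω ∈ ans (Query.qunion q1 q2) G) (hnot : ω ∉ ans q2 G) :
    SolMap.dom ω ∈ adm q1 :=
  dom_mem_adm_of_mem_ans (hmem.resolve_right hnot)

/-- binding provenance for SPARQL answers over a plain graph. -/
theorem stmt_9 {V U C R : Type*} {NI : Set U} (q1 q2 : Query V U C R NI)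
    (hw1 : q1.WF) (hw2 : q2.WF) (G : Graph U C R) (ω : SolMap V U)
    (hmem : ω ∈ ans (Query.qunion q1 q2) G) (hnot : ω ∉ ans q2 G) :
    SolMap.dom ω ∈ adm q1 :=
  stmt_9_general q1 q2 G ω hmem hnot

end SPARQL
end
end

section
/- Entailment regime answers comply with SPARQL answers over a plain graph: for every SUJO query q and every ABox A, eRAns(q,A) = sparqlAns(q,A). -/
/-! With an empty TBox every graph containing `A` is a model, so the certain answers to a triple
pattern are its answers over `A` itself: these range over `aDom A` because the matched atom lies
in `A`, and they persist in every `I ⊇ A`. All other operators are evaluated alike on both sides,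
so the equality propagates by induction on the query. -/

open Classical

noncomputable section

namespace SPARQL

variable {V U C R : Type*}

variable {NI : Set U}

lemma Term.app_eq_of_mem_vars {t : Term V U NI} {ω : SolMap V U} {x : V} {u : U}
    (hx : x ∈ t.vars) (hωx : ω x = some u) : t.app ω = some u := by
  cases t with
  | var v =>
    rw [Term.vars, Set.mem_singleton_iff] at hx
    subst hx
    exact hωx
  | cst c => exact absurd hx (Set.notMem_empty x)

lemma Pattern.mem_aDom_of_app_eq {t : Pattern V U C R NI} {ω : SolMap V U} {G : Graph U C R}
    {a : Atom U C R} (ha : a ∈ G) (happ : t.app ω = some a) {x : V} {u : U}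
    (hx : x ∈ t.vars) (hωx : ω x = some u) : u ∈ G.aDom := by
  cases t with
  | concept A t =>
    rw [Pattern.app, Term.app_eq_of_mem_vars hx hωx, Option.map_some, Option.some_inj] at happ
    subst happ
    exact Or.inl ⟨A, ha⟩
  | role r t1 t2 =>
    obtain ⟨u1, h1, happ⟩ := Option.bind_eq_some_iff.mp happ
    obtain ⟨u2, h2, rfl⟩ := Option.map_eq_some_iff.mp happ
    rcases hx with hx | hx
    · rw [Term.app_eq_of_mem_vars hx hωx, Option.some_inj] at h1
      subst h1
      exact Or.inr (Or.inl ⟨r, u2, ha⟩)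
    · rw [Term.app_eq_of_mem_vars hx hωx, Option.some_inj] at h2
      subst h2
      exact Or.inr (Or.inr ⟨r, u1, ha⟩)

lemma ran_subset_aDom_of_mem_ans_pat {t : Pattern V U C R NI} {G : Graph U C R}
    {ω : SolMap V U} (hω : ω ∈ ans (Query.pat t) G) : SolMap.ran ω ⊆ G.aDom := by
  obtain ⟨hdom, a, ha, happ⟩ := hω
  rintro u ⟨x, hωx⟩
  have hx : x ∈ t.vars := hdom ▸ (show ω x ≠ none by simp [hωx])
  exact Pattern.mem_aDom_of_app_eq ha happ hx hωx

lemma ans_pat_mono (t : Pattern V U C R NI) : Monotone (ans (Query.pat t)) := by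
  rintro G I hGI ω ⟨hdom, a, ha, happ⟩
  exact ⟨hdom, a, hGI ha, happ⟩

lemma certAns_pat (t : Pattern V U C R NI) (A : Graph U C R) :
    certAns (Query.pat t) A = ans (Query.pat t) A := by
  ext ω
  refine ⟨fun hω => hω.2 A le_rfl, fun hω => ⟨ran_subset_aDom_of_mem_ans_pat hω, ?_⟩⟩
  exact fun I hAI => ans_pat_mono t hAI hω

theorem stmt_15_general {V U C R : Type*} {NI : Set U} (q : Query V U C R NI)
    (A : Graph U C R) :
    eRAns q A = ans q A := by
  induction q with
  | pat t => exact certAns_pat t A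
  | select X q ih => rw [eRAns, ans, ih]
  | qunion q1 q2 ih1 ih2 => rw [eRAns, ans, ih1, ih2]
  | qjoin q1 q2 ih1 ih2 => rw [eRAns, ans, ih1, ih2]
  | qopt q1 q2 ih1 ih2 => rw [eRAns, ans, ih1, ih2]

/-- entailment regime answers comply with SPARQL answers over a plain
graph: eRAns(q,A) = sparqlAns(q,A). -/
theorem stmt_15 {V U C R : Type*} {NI : Set U} (q : Query V U C R NI) (hw : q.WF)
    (A : Graph U C R) (hA : Graph.IsABox NI A) :
    eRAns q A = ans q A :=
  stmt_15_general q A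

end SPARQL
end
end

section
/- For every JO query q, base(q) has a least element with respect to set inclusion: there exists M ∈ base(q) with M ⊆ B for every B ∈ base(q); equivalently, the set min_⊆(base(q)) of ⊆-minimal elements of base(q) is a singleton. -/
open Classical

noncomputable section

namespace SPARQL

variable {V U C R : Type*}

variable {NI : Set U}

lemma minEls_eq_singleton_of_isLeast {F : Set (Set V)} {M : Set V} (h : IsLeast F M) :
    minEls F = {M} := by
  ext B
  constructor
  · rintro ⟨hB, hmin⟩
    exact (hmin M h.1 (h.2 hB)).symm
  · rintro rfl
    exact ⟨h.1, fun B' hB' hsub => subset_antisymm hsub (h.2 hB')⟩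

def joinFamily (F1 F2 : Set (Set V)) : Set (Set V) :=
  {Y | ∃ B1 ∈ minEls F1, ∃ B2 ∈ F2, Y = B1 ∪ B2} ∪
    {Y | ∃ B1 ∈ F1, ∃ B2 ∈ minEls F2, Y = B1 ∪ B2}

lemma base_qjoin (q1 q2 : Query V U C R NI) :
    base (.qjoin q1 q2) = joinFamily (base q1) (base q2) := rfl

lemma base_qopt (q1 q2 : Query V U C R NI) :
    base (.qopt q1 q2) = base q1 ∪ joinFamily (base q1) (base q2) := rfl

lemma isLeast_joinFamily {F1 F2 : Set (Set V)} {M1 M2 : Set V} (h1 : IsLeast F1 M1)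
    (h2 : IsLeast F2 M2) : IsLeast (joinFamily F1 F2) (M1 ∪ M2) := by
  have hmin1 := minEls_eq_singleton_of_isLeast h1
  have hmin2 := minEls_eq_singleton_of_isLeast h2
  refine ⟨Or.inl ⟨M1, hmin1 ▸ rfl, M2, h2.1, rfl⟩, ?_⟩
  rintro _ (⟨B1, hB1, B2, hB2, rfl⟩ | ⟨B1, hB1, B2, hB2, rfl⟩)
  · rw [hmin1, Set.mem_singleton_iff] at hB1
    exact Set.union_subset_union hB1.ge (h2.2 hB2)
  · rw [hmin2, Set.mem_singleton_iff] at hB2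
    exact Set.union_subset_union (h1.2 hB1) hB2.ge

lemma isLeast_union_joinFamily {F1 F2 : Set (Set V)} {M1 M2 : Set V} (h1 : IsLeast F1 M1)
    (h2 : IsLeast F2 M2) : IsLeast (F1 ∪ joinFamily F1 F2) M1 := by
  refine ⟨Or.inl h1.1, ?_⟩
  rintro B (hB | hB)
  · exact h1.2 hB
  · exact Set.subset_union_left.trans ((isLeast_joinFamily h1 h2).2 hB)

lemma exists_isLeast_base {q : Query V U C R NI} (hq : IsJO q) : ∃ M, IsLeast (base q) M := by
  induction q with
  | pat t => exact ⟨t.vars, isLeast_singleton⟩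
  | select | qunion => exact hq.elim
  | qjoin q1 q2 ih1 ih2 =>
    obtain ⟨M1, h1⟩ := ih1 hq.1
    obtain ⟨M2, h2⟩ := ih2 hq.2
    exact ⟨M1 ∪ M2, base_qjoin q1 q2 ▸ isLeast_joinFamily h1 h2⟩
  | qopt q1 q2 ih1 ih2 =>
    obtain ⟨M1, h1⟩ := ih1 hq.1
    obtain ⟨M2, h2⟩ := ih2 hq.2
    exact ⟨M1, base_qopt q1 q2 ▸ isLeast_union_joinFamily h1 h2⟩

/-- for a JO query q, base(q) has a least element w.r.t. ⊆;
equivalently min_⊆(base(q)) is a singleton. -/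
theorem stmt_16 {V U C R : Type*} {NI : Set U} (q : Query V U C R NI) (hq : IsJO q) :
    ∃ M ∈ base q, (∀ B ∈ base q, M ⊆ B) ∧ minEls (base q) = {M} := by
  obtain ⟨M, hM⟩ := exists_isLeast_base hq
  exact ⟨M, hM.1, fun _ hB => hM.2 hB, minEls_eq_singleton_of_isLeast hM⟩

end SPARQL
end
end

section
/- For every JO query q, the family adm(q) is closed under binary unions: if X1 ∈ adm(q) and X2 ∈ adm(q), then X1 ∪ X2 ∈ adm(q). -/
open Classical

noncomputable section

namespace SPARQL

variable {V U C R : Type*}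

variable {NI : Set U}

open scoped SetFamily

section SupClosed

variable {α : Type*} [SemilatticeSup α] {s t : Set α}

theorem _root_.SupClosed.sups (hs : SupClosed s) (ht : SupClosed t) : SupClosed (s ⊻ t) := by
  rw [← Set.sups_subset_self, Set.sups_sups_sups_comm, Set.sups_eq_self.2 hs,
    Set.sups_eq_self.2 ht]

theorem _root_.SupClosed.union_sups (hs : SupClosed s) (ht : SupClosed t) :
    SupClosed (s ∪ s ⊻ t) := by
  rintro x (hx | ⟨a, ha, b, hb, rfl⟩) y (hy | ⟨a', ha', b', hb', rfl⟩)
  · exact .inl (hs hx hy)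
  · exact .inr ⟨x ⊔ a', hs hx ha', b', hb', sup_assoc _ _ _⟩
  · exact .inr ⟨a ⊔ y, hs ha hy, b, hb, sup_right_comm _ _ _⟩
  · exact .inr (SupClosed.sups hs ht ⟨a, ha, b, hb, rfl⟩ ⟨a', ha', b', hb', rfl⟩)

end SupClosed

theorem adm_qjoin (q1 q2 : Query V U C R NI) : adm (.qjoin q1 q2) = adm q1 ⊻ adm q2 := by
  ext Y
  simp only [adm, Set.mem_ofPred_eq, Set.mem_sups, eq_comm (a := Y)]
  rfl

theorem adm_qopt (q1 q2 : Query V U C R NI) : adm (.qopt q1 q2) = adm q1 ∪ adm q1 ⊻ adm q2 := by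
  rw [← adm_qjoin]
  rfl

theorem IsJO.supClosed_adm {q : Query V U C R NI} (hq : IsJO q) : SupClosed (adm q) := by
  induction q with
  | pat => exact supClosed_singleton
  | select => exact hq.elim
  | qunion => exact hq.elim
  | qjoin q1 q2 ih1 ih2 => rw [adm_qjoin]; exact SupClosed.sups (ih1 hq.1) (ih2 hq.2)
  | qopt q1 q2 ih1 ih2 => rw [adm_qopt]; exact SupClosed.union_sups (ih1 hq.1) (ih2 hq.2)

/-- for a JO query q, adm(q) is closed under binary unions. -/
theorem stmt_18 {V U C R : Type*} {NI : Set U} (q : Query V U C R NI) (hq : IsJO q)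
    (X1 X2 : Set V) (h1 : X1 ∈ adm q) (h2 : X2 ∈ adm q) :
    X1 ∪ X2 ∈ adm q :=
  hq.supClosed_adm h1 h2

end SPARQL
end
end

section
/- Correctness of the maximality test via base: for every JO query q and all sets of variables X1, X2 ⊆ vars(q), X1 is a ⊆-maximal element of {Y ∈ adm(q) : Y ⊆ X2} if and only if X1 ∈ adm(q), X1 ⊆ X2, and there is no B ∈ base(q) with X1 ⊊ X1 ∪ B ⊆ X2. -/
open Classical

noncomputable section

namespace SPARQL

variable {V U C R : Type*}

variable {NI : Set U}

/-! A base set can be added to any admissible set without leaving adm(q), so a base set B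
with X1 ⊊ X1 ∪ B ⊆ X2 shows that X1 is not maximal. Conversely, every variable of an
admissible set Y lies in a base set contained in Y; if X1 ⊊ Y ⊆ X2 with Y admissible, a variable
of Y ∖ X1 therefore yields such a B. Both facts are proved by induction on the JO query, the
JOIN case pairing a base set of one side with a ⊆-minimal base set of the other, which exists
because base(q) is finite. -/

section BaseAdm

variable {V U C R : Type*} {NI : Set U}

lemma minEls_subset (F : Set (Set V)) : minEls F ⊆ F := fun _ h => h.1

lemma exists_mem_minEls_subset {F : Set (Set V)} (hF : F.Finite) {B : Set V} (hB : B ∈ F) :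
    ∃ B' ∈ minEls F, B' ⊆ B := by
  obtain ⟨B', hB'B, hmin⟩ := hF.exists_le_minimal hB
  exact ⟨B', ⟨hmin.prop, fun B'' hB'' hle => (hmin.eq_of_le hB'' hle)⟩, hB'B⟩

lemma setOf_eq_union_eq_image2 (S1 S2 : Set (Set V)) :
    {Y | ∃ B1 ∈ S1, ∃ B2 ∈ S2, Y = B1 ∪ B2} = Set.image2 (· ∪ ·) S1 S2 := by
  ext Y; simp [Set.mem_image2, eq_comm]

lemma base_finite (q : Query V U C R NI) : (base q).Finite := by
  induction q with
  | pat t => exact Set.finite_singleton _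
  | select => exact Set.finite_empty
  | qunion => exact Set.finite_empty
  | qjoin q1 q2 ih1 ih2 =>
    simp only [base, setOf_eq_union_eq_image2]
    exact (ih1.subset (minEls_subset _)).image2 _ ih2 |>.union <|
      ih1.image2 _ (ih2.subset (minEls_subset _))
  | qopt q1 q2 ih1 ih2 =>
    simp only [base, setOf_eq_union_eq_image2]
    exact ih1.union <| (ih1.subset (minEls_subset _)).image2 _ ih2 |>.union <|
      ih1.image2 _ (ih2.subset (minEls_subset _))

lemma base_subset_adm (q : Query V U C R NI) : base q ⊆ adm q := by
  induction q with
  | pat t => exact subset_rfl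
  | select => exact Set.empty_subset _
  | qunion => exact Set.empty_subset _
  | qjoin q1 q2 ih1 ih2 =>
    rintro _ (⟨B1, hB1, B2, hB2, rfl⟩ | ⟨B1, hB1, B2, hB2, rfl⟩)
    · exact ⟨B1, ih1 hB1.1, B2, ih2 hB2, rfl⟩
    · exact ⟨B1, ih1 hB1, B2, ih2 hB2.1, rfl⟩
  | qopt q1 q2 ih1 ih2 =>
    rintro _ (hB | ⟨B1, hB1, B2, hB2, rfl⟩ | ⟨B1, hB1, B2, hB2, rfl⟩)
    · exact Or.inl (ih1 hB)
    · exact Or.inr ⟨B1, ih1 hB1.1, B2, ih2 hB2, rfl⟩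
    · exact Or.inr ⟨B1, ih1 hB1, B2, ih2 hB2.1, rfl⟩

lemma adm_union_base_qjoin {q1 q2 : Query V U C R NI}
    (h1 : ∀ {X B}, X ∈ adm q1 → B ∈ base q1 → X ∪ B ∈ adm q1)
    (h2 : ∀ {X B}, X ∈ adm q2 → B ∈ base q2 → X ∪ B ∈ adm q2) {X B : Set V}
    (hX : X ∈ adm (.qjoin q1 q2)) (hB : B ∈ base (.qjoin q1 q2)) :
    X ∪ B ∈ adm (.qjoin q1 q2) := by
  obtain ⟨X1, hX1, X2, hX2, rfl⟩ := hX
  rcases hB with ⟨B1, hB1, B2, hB2, rfl⟩ | ⟨B1, hB1, B2, hB2, rfl⟩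
  · exact ⟨X1 ∪ B1, h1 hX1 hB1.1, X2 ∪ B2, h2 hX2 hB2, Set.union_union_union_comm ..⟩
  · exact ⟨X1 ∪ B1, h1 hX1 hB1, X2 ∪ B2, h2 hX2 hB2.1, Set.union_union_union_comm ..⟩

lemma adm_union_base (q : Query V U C R NI) {X B : Set V} (hX : X ∈ adm q)
    (hB : B ∈ base q) : X ∪ B ∈ adm q := by
  induction q generalizing X B with
  | pat t =>
    rw [hX, hB, Set.union_self]
    rfl
  | select => exact hB.elim
  | qunion => exact hB.elim
  | qjoin q1 q2 ih1 ih2 => exact adm_union_base_qjoin ih1 ih2 hX hB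
  | qopt q1 q2 ih1 ih2 =>
    rcases hX with hX | hX <;> rcases hB with hB | hB
    · exact Or.inl (ih1 hX hB)
    · obtain ⟨B1, hB1, B2, hB2, rfl⟩ | ⟨B1, hB1, B2, hB2, rfl⟩ := hB
      · exact Or.inr ⟨X ∪ B1, ih1 hX hB1.1, B2, base_subset_adm q2 hB2,
          (Set.union_assoc ..).symm⟩
      · exact Or.inr ⟨X ∪ B1, ih1 hX hB1, B2, base_subset_adm q2 hB2.1,
          (Set.union_assoc ..).symm⟩
    · obtain ⟨X1, hX1, X2, hX2, rfl⟩ := hX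
      exact Or.inr ⟨X1 ∪ B, ih1 hX1 hB, X2, hX2, Set.union_right_comm ..⟩
    · exact Or.inr (adm_union_base_qjoin ih1 ih2 hX hB)

lemma exists_base_subset_qjoin {q1 q2 : Query V U C R NI}
    (h1 : ∀ {Y}, Y ∈ adm q1 → ∃ B ∈ base q1, B ⊆ Y)
    (h2 : ∀ {Y}, Y ∈ adm q2 → ∃ B ∈ base q2, B ⊆ Y) {Y : Set V}
    (hY : Y ∈ adm (.qjoin q1 q2)) : ∃ B ∈ base (.qjoin q1 q2), B ⊆ Y := by
  obtain ⟨Y1, hY1, Y2, hY2, rfl⟩ := hY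
  obtain ⟨B1, hB1, hB1Y⟩ := h1 hY1
  obtain ⟨B2, hB2, hB2Y⟩ := h2 hY2
  obtain ⟨B1', hB1', hB1'B1⟩ := exists_mem_minEls_subset (base_finite q1) hB1
  exact ⟨B1' ∪ B2, Or.inl ⟨B1', hB1', B2, hB2, rfl⟩,
    Set.union_subset_union (hB1'B1.trans hB1Y) hB2Y⟩

lemma exists_base_subset {q : Query V U C R NI} (hq : IsJO q) {Y : Set V}
    (hY : Y ∈ adm q) : ∃ B ∈ base q, B ⊆ Y := by
  induction q generalizing Y with
  | pat t => exact ⟨t.vars, rfl, hY.symm.subset⟩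
  | select => exact hq.elim
  | qunion => exact hq.elim
  | qjoin q1 q2 ih1 ih2 => exact exists_base_subset_qjoin (ih1 hq.1) (ih2 hq.2) hY
  | qopt q1 q2 ih1 ih2 =>
    rcases hY with hY | hY
    · obtain ⟨B, hB, hBY⟩ := ih1 hq.1 hY
      exact ⟨B, Or.inl hB, hBY⟩
    · obtain ⟨B, hB, hBY⟩ := exists_base_subset_qjoin (ih1 hq.1) (ih2 hq.2) hY
      exact ⟨B, Or.inr hB, hBY⟩

lemma exists_minEls_base_subset_of_mem_adm {q : Query V U C R NI} (hq : IsJO q) {Y : Set V}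
    (hY : Y ∈ adm q) : ∃ B ∈ minEls (base q), B ⊆ Y := by
  obtain ⟨B, hB, hBY⟩ := exists_base_subset hq hY
  obtain ⟨B', hB', hB'B⟩ := exists_mem_minEls_subset (base_finite q) hB
  exact ⟨B', hB', hB'B.trans hBY⟩

lemma exists_base_mem_subset_qjoin {q1 q2 : Query V U C R NI} (hq1 : IsJO q1) (hq2 : IsJO q2)
    (h1 : ∀ {Y v}, Y ∈ adm q1 → v ∈ Y → ∃ B ∈ base q1, v ∈ B ∧ B ⊆ Y)
    (h2 : ∀ {Y v}, Y ∈ adm q2 → v ∈ Y → ∃ B ∈ base q2, v ∈ B ∧ B ⊆ Y) {Y : Set V} {v : V}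
    (hY : Y ∈ adm (.qjoin q1 q2)) (hv : v ∈ Y) : ∃ B ∈ base (.qjoin q1 q2), v ∈ B ∧ B ⊆ Y := by
  obtain ⟨Y1, hY1, Y2, hY2, rfl⟩ := hY
  rcases hv with hv | hv
  · obtain ⟨B1, hB1, hvB1, hB1Y⟩ := h1 hY1 hv
    obtain ⟨B2, hB2, hB2Y⟩ := exists_minEls_base_subset_of_mem_adm hq2 hY2
    exact ⟨B1 ∪ B2, Or.inr ⟨B1, hB1, B2, hB2, rfl⟩, Or.inl hvB1,
      Set.union_subset_union hB1Y hB2Y⟩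
  · obtain ⟨B1, hB1, hB1Y⟩ := exists_minEls_base_subset_of_mem_adm hq1 hY1
    obtain ⟨B2, hB2, hvB2, hB2Y⟩ := h2 hY2 hv
    exact ⟨B1 ∪ B2, Or.inl ⟨B1, hB1, B2, hB2, rfl⟩, Or.inr hvB2,
      Set.union_subset_union hB1Y hB2Y⟩

lemma exists_base_mem_subset {q : Query V U C R NI} (hq : IsJO q) {Y : Set V} {v : V}
    (hY : Y ∈ adm q) (hv : v ∈ Y) : ∃ B ∈ base q, v ∈ B ∧ B ⊆ Y := by
  induction q generalizing Y v with
  | pat t => exact ⟨t.vars, rfl, hY ▸ hv, hY.symm.subset⟩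
  | select => exact hq.elim
  | qunion => exact hq.elim
  | qjoin q1 q2 ih1 ih2 =>
    exact exists_base_mem_subset_qjoin hq.1 hq.2 (ih1 hq.1) (ih2 hq.2) hY hv
  | qopt q1 q2 ih1 ih2 =>
    rcases hY with hY | hY
    · obtain ⟨B, hB, hvB, hBY⟩ := ih1 hq.1 hY hv
      exact ⟨B, Or.inl hB, hvB, hBY⟩
    · obtain ⟨B, hB, hvB, hBY⟩ :=
        exists_base_mem_subset_qjoin hq.1 hq.2 (ih1 hq.1) (ih2 hq.2) hY hv
      exact ⟨B, Or.inr hB, hvB, hBY⟩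

end BaseAdm

theorem stmt_19_general {V U C R : Type*} {NI : Set U} (q : Query V U C R NI) (hq : IsJO q)
    (X1 X2 : Set V) :
    (X1 ∈ adm q ∧ X1 ⊆ X2 ∧ ∀ Y ∈ adm q, Y ⊆ X2 → X1 ⊆ Y → Y = X1) ↔
    (X1 ∈ adm q ∧ X1 ⊆ X2 ∧ ¬ ∃ B ∈ base q, X1 ⊂ X1 ∪ B ∧ X1 ∪ B ⊆ X2) := by
  refine and_congr_right fun hX1 => and_congr_right fun _ => ⟨?_, ?_⟩
  · rintro hmax ⟨B, hB, hlt, hle⟩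
    exact hlt.ne (hmax _ (adm_union_base q hX1 hB) hle Set.subset_union_left).symm
  · intro hnb Y hY hYX2 hX1Y
    by_contra hne
    obtain ⟨v, hvY, hvX1⟩ := Set.exists_of_ssubset (hX1Y.ssubset_of_ne (Ne.symm hne))
    obtain ⟨B, hB, hvB, hBY⟩ := exists_base_mem_subset hq hY hvY
    exact hnb ⟨B, hB, Set.ssubset_iff_exists.2 ⟨Set.subset_union_left, v, Or.inr hvB, hvX1⟩,
      Set.union_subset (hX1Y.trans hYX2) (hBY.trans hYX2)⟩

/-- correctness of the maximality test via base: X1 is ⊆-maximal in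
{Y ∈ adm(q) : Y ⊆ X2} iff X1 ∈ adm(q), X1 ⊆ X2 and no B ∈ base(q) satisfies
X1 ⊊ X1 ∪ B ⊆ X2. -/
theorem stmt_19 {V U C R : Type*} {NI : Set U} (q : Query V U C R NI) (hq : IsJO q)
    (X1 X2 : Set V) (hX1 : X1 ⊆ Query.vars q) (hX2 : X2 ⊆ Query.vars q) :
    (X1 ∈ adm q ∧ X1 ⊆ X2 ∧ ∀ Y ∈ adm q, Y ⊆ X2 → X1 ⊆ Y → Y = X1) ↔
    (X1 ∈ adm q ∧ X1 ⊆ X2 ∧ ¬ ∃ B ∈ base q, X1 ⊂ X1 ∪ B ∧ X1 ∪ B ⊆ X2) :=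
  stmt_19_general q hq X1 X2

end SPARQL
end
end
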